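/- a_HTT(1) = a_HTT(2) = 0, a_HTT(3) = 1, and for all n ≥ 1, a_HTT(n+3) = 2·a_HTT(n+2) − a_HTT(n). -/

import Mathlib

/-- The number of binary sequences (lists of Booleans, `true` = H, `false` = T) of
length `n` in which the word `W` appears for the first time exactly at the end:
`W` is a suffix of `l` and `W` does not occur as a contiguous sublist of `l` with
its last entry removed. -/
noncomputable def firstCount (W : List Bool) (n : ℕ) : ℕ :=
  Nat.card {l : List Bool // l.length = n ∧ W <:+ l ∧ ¬ (W <:+: l.dropLast)}

/-!
Let `b(n)` count the words of length `n` avoiding `W`. Appending a letter to a `W`-free word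
gives either a `W`-free word or a word in which `W` first appears at the end, and both kinds
arise exactly once in this way, so `2 b(n) = b(n+1) + a(n+1)`. Since `HTT` cannot overlap
itself, the words of length `n + 3` ending with their first `HTT` are exactly the words
`p ++ HTT` with `p` free of `HTT`, so `a(n+3) = b(n)`. Eliminating `b` gives the recurrence.
-/

namespace List

variable {α : Type*}

theorem infix_iff_suffix_or_infix_dropLast {w l : List α} :
    w <:+: l ↔ w <:+ l ∨ w <:+: l.dropLast := by
  rcases l.eq_nil_or_concat' with rfl | ⟨p, x, rfl⟩
  · simp
  · rw [dropLast_concat, infix_concat_iff]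

end List

open List Set

noncomputable def avoidCount (W : List Bool) (n : ℕ) : ℕ :=
  Nat.card {l : List Bool // l.length = n ∧ ¬ W <:+: l}

lemma firstCount_eq_ncard (W : List Bool) (n : ℕ) :
    firstCount W n = {l : List Bool | l.length = n ∧ W <:+ l ∧ ¬ W <:+: l.dropLast}.ncard :=
  rfl

lemma avoidCount_eq_ncard (W : List Bool) (n : ℕ) :
    avoidCount W n = {l : List Bool | l.length = n ∧ ¬ W <:+: l}.ncard :=
  rfl

lemma firstCount_eq_zero_of_lt_length {W : List Bool} {n : ℕ} (hn : n < W.length) :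
    firstCount W n = 0 := by
  rw [firstCount, Nat.card_eq_zero]
  exact .inl ⟨fun ⟨l, hl, hW, _⟩ => by have := hW.length_le; omega⟩

lemma avoidCount_zero {W : List Bool} (hW : W ≠ []) : avoidCount W 0 = 1 := by
  rw [avoidCount, Nat.card_eq_one_iff_exists]
  exact ⟨⟨[], rfl, by simpa using hW⟩, fun ⟨_, hl, _⟩ => Subtype.ext (eq_nil_of_length_eq_zero hl)⟩

lemma avoidCount_succ_add_firstCount_succ (W : List Bool) (k : ℕ) :
    avoidCount W (k + 1) + firstCount W (k + 1) = 2 * avoidCount W k := by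
  simp only [avoidCount_eq_ncard, firstCount_eq_ncard]
  let A (n : ℕ) : Set (List Bool) := {l | l.length = n ∧ ¬ W <:+: l}
  let S : Set (List Bool) := {l | l.length = k + 1 ∧ ¬ W <:+: l.dropLast}
  have hS : S = (fun xp : Bool × List Bool => xp.2 ++ [xp.1]) '' (univ ×ˢ A k) := by
    ext l
    constructor
    · rintro ⟨hl, hW⟩
      obtain ⟨p, x, rfl⟩ := l.eq_nil_or_concat'.resolve_left (ne_nil_of_length_eq_add_one hl)
      exact ⟨(x, p), ⟨trivial, by simpa using hl, by simpa using hW⟩, rfl⟩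
    · rintro ⟨⟨x, p⟩, ⟨-, hp, hpW⟩, rfl⟩
      exact ⟨by simp [hp], by simpa using hpW⟩
  have hinj : Function.Injective fun xp : Bool × List Bool => xp.2 ++ [xp.1] := by
    rintro ⟨x, p⟩ ⟨y, q⟩ h
    obtain ⟨rfl, hxy⟩ := append_inj' h rfl
    simp_all
  have hfirst : S ∩ {l | W <:+ l} = {l | l.length = k + 1 ∧ W <:+ l ∧ ¬ W <:+: l.dropLast} := by
    ext l
    simp only [S, mem_inter_iff, mem_ofPred_eq]
    tauto
  have havoid : S \ {l | W <:+ l} = A (k + 1) := by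
    ext l
    simp only [S, A, mem_sdiff, mem_ofPred_eq]
    rw [infix_iff_suffix_or_infix_dropLast (l := l)]
    tauto
  have hsplit := ncard_inter_add_ncard_sdiff_eq_ncard S {l | W <:+ l}
    ((finite_length_eq Bool (k + 1)).subset fun _ hl => hl.1)
  rw [hfirst, havoid, hS, ncard_image_of_injective _ hinj, ncard_prod, ncard_univ,
    Nat.card_eq_fintype_card, Fintype.card_bool] at hsplit
  rw [← hsplit, add_comm]

-- `hW_overlap` holds as soon as no proper nonempty prefix of `W` is also a suffix of `W`.
lemma firstCount_add_length {W : List Bool} (hW : W ≠ [])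
    (hW_overlap : ∀ p : List Bool, W <:+: p ++ W.dropLast → W <:+: p) (n : ℕ) :
    firstCount W (n + W.length) = avoidCount W n := by
  rw [firstCount_eq_ncard, avoidCount_eq_ncard]
  have hset : {l : List Bool | l.length = n + W.length ∧ W <:+ l ∧ ¬ W <:+: l.dropLast} =
      (· ++ W) '' {p | p.length = n ∧ ¬ W <:+: p} := by
    ext l
    constructor
    · rintro ⟨hl, ⟨p, rfl⟩, hfirst⟩
      refine ⟨p, ⟨by simpa using hl, fun hp => hfirst (hp.trans ?_)⟩, rfl⟩
      rw [dropLast_append_of_ne_nil hW]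
      exact (prefix_append _ _).isInfix
    · rintro ⟨p, ⟨hp, hpW⟩, rfl⟩
      refine ⟨by simp [hp], suffix_append _ _, fun h => hpW (hW_overlap p ?_)⟩
      rwa [dropLast_append_of_ne_nil hW] at h
  rw [hset, ncard_image_of_injective _ (append_left_injective W)]

lemma infix_of_htt_infix_append_ht {p : List Bool}
    (h : [true, false, false] <:+: p ++ [true, false]) : [true, false, false] <:+: p := by
  rw [show p ++ [true, false] = p ++ [true] ++ [false] by simp] at h
  simp only [infix_concat_iff, suffix_concat_iff] at h
  simpa [cons_eq_append_iff] using h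

theorem stmt_9 :
    firstCount [true, false, false] 1 = 0 ∧ firstCount [true, false, false] 2 = 0 ∧
    firstCount [true, false, false] 3 = 1 ∧
    ∀ n : ℕ, 1 ≤ n →
      (firstCount [true, false, false] (n + 3) : ℤ)
        = 2 * (firstCount [true, false, false] (n + 2) : ℤ)
          - (firstCount [true, false, false] n : ℤ) := by
  have hW : [true, false, false] ≠ [] := by simp
  have hshift (n : ℕ) :
      firstCount [true, false, false] (n + 3) = avoidCount [true, false, false] n :=
    firstCount_add_length hW (fun _ => infix_of_htt_infix_append_ht) n
  refine ⟨firstCount_eq_zero_of_lt_length (by simp), firstCount_eq_zero_of_lt_length (by simp),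
    (hshift 0).trans (avoidCount_zero hW), ?_⟩
  rintro (_ | m) hm
  · omega
  · have hstep := avoidCount_succ_add_firstCount_succ [true, false, false] m
    rw [hshift, show m + 1 + 2 = m + 3 by rfl, hshift]
    omega
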